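/- arXiv:2512.10842 — 4 statements merged into one kernel-verified Lean document; each statement's English description precedes it below -/
import Mathlib

section
/- Let A be a unital C*-algebra, m ≥ 1, and F : A → M_m(ℂ) a linear map. Then φ_F is a state on the C*-algebra M_m(A) if and only if F is completely positive and Tr(F(1_A)) = 1 (i.e., F is a trace channel with respect to the canonical trace Tr on M_m(ℂ)). -/
open scoped ComplexOrder
open Finset

/-- A linear map `F : A → B` is completely positive if for every `n`, applying `F` entrywise
to `M_n(A)` maps positive elements (elements of the form `y⋆ y`) to positive elements. -/
def IsCompletelyPositive {A B : Type*}
    [NonUnitalSemiring A] [StarRing A] [Module ℂ A]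
    [NonUnitalSemiring B] [StarRing B] [Module ℂ B] (F : A →ₗ[ℂ] B) : Prop :=
  ∀ (n : ℕ) (M : Matrix (Fin n) (Fin n) A),
    (∃ Y : Matrix (Fin n) (Fin n) A, M = star Y * Y) →
    ∃ Z : Matrix (Fin n) (Fin n) B, M.map F = star Z * Z

/-- The linear functional `φ_F` on `M_m(A)` given by `φ_F(X) = Σ_{r,s} (F (X r s)) r s`. -/
noncomputable def phiF {A : Type*} [CStarAlgebra A] {m : ℕ}
    (F : A →ₗ[ℂ] Matrix (Fin m) (Fin m) ℂ) : Matrix (Fin m) (Fin m) A →ₗ[ℂ] ℂ where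
  toFun X := ∑ r, ∑ s, F (X r s) r s
  map_add' X Y := by
    simp [Matrix.add_apply, Finset.sum_add_distrib]
  map_smul' c X := by
    simp [Matrix.smul_apply, Finset.mul_sum]

/-!
Flatten `Mₙ(Mₘ(ℂ))` to `M_{n×m}(ℂ)`: complete positivity of `F` says that every flattened
matrix `[F((Y⋆Y)ᵢⱼ)]` is positive semidefinite, and `φ_F(X)` is the expectation of the
flattened `[F(Xᵢⱼ)]` in the unnormalised maximally entangled vector `Σᵣ eᵣ ⊗ eᵣ`; this gives
the backward implication. Conversely, the quadratic form of `[F((Y⋆Y)ᵢⱼ)]` at `x ∈ ℂ^{n×m}`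
equals `φ_F(B⋆B)` for the rectangular matrix `B = Y x` (`x` read as an `n × m` scalar
matrix), and `B⋆B` is the sum of the `X⋆X` over the one-row matrices `X` cut out of `B`.
Over `ℂ` a nonnegative quadratic form is Hermitian by polarisation, so the flattened matrix
is positive semidefinite.
-/

namespace Matrix

variable {n k : Type*} [Fintype n] [Fintype k]

lemma comp_star_mul_self {R : Type*} [CommRing R] [StarRing R] (Z : Matrix n n (Matrix k k R)) :
    comp n n k k R (star Z * Z) = star (comp n n k k R Z) * comp n n k k R Z := by
  rw [← compRingEquiv_apply, map_mul]; rfl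

open scoped MatrixOrder in
lemma exists_eq_star_mul_self_iff_posSemidef_comp {𝕜 : Type*} [RCLike 𝕜]
    (M : Matrix n n (Matrix k k 𝕜)) :
    (∃ Z, M = star Z * Z) ↔ (comp n n k k 𝕜 M).PosSemidef := by
  constructor
  · rintro ⟨Z, rfl⟩
    rw [comp_star_mul_self]
    exact posSemidef_conjTranspose_mul_self _
  · intro h
    classical
    obtain ⟨B, hB⟩ := CStarAlgebra.nonneg_iff_eq_star_mul_self.mp h.nonneg
    refine ⟨(comp n n k k 𝕜).symm B, (comp n n k k 𝕜).injective ?_⟩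
    rw [comp_star_mul_self, Equiv.apply_symm_apply, hB]

lemma posSemidef_of_forall_dotProduct_mulVec_nonneg {M : Matrix n n ℂ}
    (h : ∀ x, 0 ≤ star x ⬝ᵥ M *ᵥ x) : M.PosSemidef := by
  classical
  have inner_eq (v : EuclideanSpace ℂ n) :
      inner ℂ (M.toEuclideanLin v) v = star v.ofLp ⬝ᵥ M *ᵥ v.ofLp := by
    rw [EuclideanSpace.inner_eq_star_dotProduct, dotProduct_star, dotProduct_comm]
    exact (IsSelfAdjoint.of_nonneg (h v.ofLp)).star_eq
  rw [← isPositive_toEuclideanLin_iff, LinearMap.isPositive_iff,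
    LinearMap.isSymmetric_iff_inner_map_self_real]
  simp only [inner_eq]
  exact ⟨fun v => (IsSelfAdjoint.of_nonneg (h v.ofLp)).star_eq, fun v => h v.ofLp⟩

end Matrix

open Matrix

section phiF

variable {A : Type*} [CStarAlgebra A] {m : ℕ} (F : A →ₗ[ℂ] Matrix (Fin m) (Fin m) ℂ)

lemma phiF_apply (X : Matrix (Fin m) (Fin m) A) : phiF F X = ∑ r, ∑ s, F (X r s) r s := rfl

lemma phiF_conjTranspose_mul_mul_eq_dotProduct {ι : Type*} [Fintype ι] (M : Matrix ι ι A)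
    (C : Matrix ι (Fin m) ℂ) :
    phiF F ((C.map (algebraMap ℂ A))ᴴ * M * C.map (algebraMap ℂ A)) =
      star (fun p => C p.1 p.2) ⬝ᵥ comp ι ι (Fin m) (Fin m) ℂ (M.map F) *ᵥ fun p => C p.1 p.2 := by
  simp only [phiF_apply, Matrix.mul_assoc, mul_apply, conjTranspose_apply, map_apply,
    ← algebraMap_star_comm, ← Algebra.smul_def, ← Algebra.commutes, map_sum,
    map_smul, Matrix.sum_apply, Matrix.smul_apply, smul_eq_mul, dotProduct, mulVec,
    Fintype.sum_prod_type, Pi.star_apply, comp_apply, Finset.mul_sum]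
  simp_rw [Finset.sum_comm (γ := ι) (α := Fin m)]
  simp only [mul_comm (C _ _)]

lemma phiF_eq_dotProduct (X : Matrix (Fin m) (Fin m) A) :
    phiF F X = star (fun p => (1 : Matrix (Fin m) (Fin m) ℂ) p.1 p.2) ⬝ᵥ
      comp (Fin m) (Fin m) (Fin m) (Fin m) ℂ (X.map F) *ᵥ
        fun p => (1 : Matrix (Fin m) (Fin m) ℂ) p.1 p.2 := by
  rw [← phiF_conjTranspose_mul_mul_eq_dotProduct, Matrix.map_one _ (map_zero _) (map_one _), conjTranspose_one,
    Matrix.one_mul, Matrix.mul_one]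

lemma phiF_one : phiF F 1 = trace (F 1) := by
  simp [phiF_apply, one_apply, apply_ite F, Matrix.ite_apply, trace]

lemma phiF_conjTranspose_mul_self_nonneg
    (hpos : ∀ X : Matrix (Fin m) (Fin m) A, 0 ≤ phiF F (star X * X))
    {ι : Type*} [Fintype ι] (B : Matrix ι (Fin m) A) : 0 ≤ phiF F (Bᴴ * B) := by
  rcases isEmpty_or_nonempty (Fin m) with _ | ⟨⟨z⟩⟩
  · simp [phiF_apply]
  have sum_rows : Bᴴ * B = ∑ k, star (updateRow 0 z (B k)) * updateRow 0 z (B k) := by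
    ext r s
    simp [mul_apply, Matrix.sum_apply, updateRow_apply, apply_ite star, ite_mul]
  rw [sum_rows, map_sum]
  exact Finset.sum_nonneg fun k _ => hpos _

lemma posSemidef_comp_map_star_mul_self
    (hpos : ∀ X : Matrix (Fin m) (Fin m) A, 0 ≤ phiF F (star X * X))
    {ι : Type*} [Fintype ι] (Y : Matrix ι ι A) :
    (comp ι ι (Fin m) (Fin m) ℂ ((star Y * Y).map F)).PosSemidef := by
  refine posSemidef_of_forall_dotProduct_mulVec_nonneg fun x => ?_
  obtain ⟨C, rfl⟩ : ∃ C : Matrix ι (Fin m) ℂ, x = fun p => C p.1 p.2 :=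
    ⟨of fun i s => x (i, s), rfl⟩
  rw [← phiF_conjTranspose_mul_mul_eq_dotProduct, star_eq_conjTranspose]
  simpa only [conjTranspose_mul, Matrix.mul_assoc] using
    phiF_conjTranspose_mul_self_nonneg F hpos (Y * C.map (algebraMap ℂ A))

end phiF

lemma isCompletelyPositive_iff_posSemidef_comp {A : Type*} [NonUnitalSemiring A] [StarRing A]
    [Module ℂ A] {k : Type*} [Fintype k] (F : A →ₗ[ℂ] Matrix k k ℂ) :
    IsCompletelyPositive F ↔ ∀ (n : ℕ) (Y : Matrix (Fin n) (Fin n) A),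
      (comp (Fin n) (Fin n) k k ℂ ((star Y * Y).map F)).PosSemidef := by
  simp only [IsCompletelyPositive, exists_eq_star_mul_self_iff_posSemidef_comp]
  exact forall_congr' fun n => ⟨fun h Y => h _ ⟨Y, rfl⟩, by rintro h _ ⟨Y, rfl⟩; exact h Y⟩

theorem phiF_state_iff_traceChannel_general
    (A : Type*) [CStarAlgebra A] (m : ℕ)
    (F : A →ₗ[ℂ] Matrix (Fin m) (Fin m) ℂ) :
    ((∀ X : Matrix (Fin m) (Fin m) A, 0 ≤ phiF F (star X * X)) ∧ phiF F 1 = 1) ↔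
      (IsCompletelyPositive F ∧ Matrix.trace (F 1) = 1) := by
  rw [isCompletelyPositive_iff_posSemidef_comp, phiF_one]
  refine and_congr_left fun _ => ⟨fun hpos n Y => posSemidef_comp_map_star_mul_self F hpos Y,
    fun hcp X => ?_⟩
  rw [phiF_eq_dotProduct]
  exact (hcp m X).dotProduct_mulVec_nonneg _

/-- Let `A` be a unital C*-algebra, `m ≥ 1` and `F : A → M_m(ℂ)` a linear
map.  Then `φ_F` is a state on `M_m(A)` if and only if `F` is completely positive and
`Tr (F 1) = 1`, i.e. `F` is a trace channel with respect to the canonical trace on `M_m(ℂ)`. -/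
theorem phiF_state_iff_traceChannel
    (A : Type*) [CStarAlgebra A] (m : ℕ) (hm : 1 ≤ m)
    (F : A →ₗ[ℂ] Matrix (Fin m) (Fin m) ℂ) :
    ((∀ X : Matrix (Fin m) (Fin m) A, 0 ≤ phiF F (star X * X)) ∧ phiF F 1 = 1) ↔
      (IsCompletelyPositive F ∧ Matrix.trace (F 1) = 1) :=
  phiF_state_iff_traceChannel_general A m F
end

section
/- Let A and B be unital C*-algebras with faithful traces τ_A and τ_B. Suppose F ∈ TC_{τ_B}(A,B) and F# : B → A is a linear map satisfying τ_B(F(a) b) = τ_A(a F#(b)) for all a ∈ A and b ∈ B. Then F# ∈ TC_{τ_A}(B,A), and ω_{τ_A}(F#) = ω_{τ_B}(F) ∘ Σᵒᵖ, where Σᵒᵖ : B ⊗ Aᵐᵒᵖ → A ⊗ Bᵐᵒᵖ is the linear isomorphism of algebraic tensor products determined by b ⊗ aᵒᵖ ↦ a ⊗ bᵒᵖ. -/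
open scoped TensorProduct ComplexOrder
open MulOpposite

/-- The Choi–Jamiolkowski functional `ω_τ(H)` on the algebraic tensor product `A ⊗ Cᵐᵒᵖ`,
determined by `ω_τ(H)(a ⊗ cᵒᵖ) = τ (H a * c)`. -/
noncomputable def omega {A C : Type*} [AddCommGroup A] [Module ℂ A]
    [NonUnitalSemiring C] [Module ℂ C] [SMulCommClass ℂ C C] [IsScalarTower ℂ C C]
    (τ : C →ₗ[ℂ] ℂ) (H : A →ₗ[ℂ] C) : A ⊗[ℂ] Cᵐᵒᵖ →ₗ[ℂ] ℂ :=
  τ ∘ₗ (LinearMap.mul' ℂ C) ∘ₗ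
    (TensorProduct.map H ((opLinearEquiv ℂ (M := C)).symm.toLinearMap))

/-- The flip map `Σᵒᵖ : B ⊗ Aᵐᵒᵖ → A ⊗ Bᵐᵒᵖ` determined by `b ⊗ aᵒᵖ ↦ a ⊗ bᵒᵖ`. -/
noncomputable def sigmaOp (A B : Type*) [AddCommGroup A] [Module ℂ A]
    [AddCommGroup B] [Module ℂ B] : B ⊗[ℂ] Aᵐᵒᵖ →ₗ[ℂ] A ⊗[ℂ] Bᵐᵒᵖ :=
  TensorProduct.lift <| LinearMap.mk₂ ℂ (fun (b : B) (a : Aᵐᵒᵖ) => a.unop ⊗ₜ[ℂ] op b)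
    (fun b₁ b₂ a => by simp [TensorProduct.tmul_add])
    (fun c b a => by simp [TensorProduct.tmul_smul])
    (fun b a₁ a₂ => by simp [TensorProduct.add_tmul])
    (fun c b a => by simp [TensorProduct.smul_tmul'])

/-!
Positive linear maps out of a C⋆-algebra preserve the star, so the traces and `F` do; pairing the
adjunction with the traces then shows that `F#` preserves the star as well. A self-adjoint
matrix `N` over `A` is positive as soon as `τ_A(tr(N P)) ≥ 0` for all positive matrices `P`:
testing against `P = N⁻` gives `τ_A(tr(N⁻ N⁻)) ≤ 0`, so `N⁻ = 0` by faithfulness. For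
`N = (Y⋆Y).map F#` and `P = W⋆W` with `(W⋆W).map F = Z⋆Z`, the adjunction and traciality turn
`τ_A(tr(N P))` into `τ_B(tr((Z Y⋆)⋆ (Z Y⋆))) ≥ 0`. The normalisation and the identity of the
functionals are the adjunction at `a = b = 1` and on elementary tensors.
-/

section StarPreservation

variable {A : Type*} [CStarAlgebra A]

lemma LinearMap.map_star_of_nonneg_star_mul_self {B : Type*} [NonUnitalRing B] [PartialOrder B]
    [StarRing B] [StarOrderedRing B] [Module ℂ B] [StarModule ℂ B]
    (f : A →ₗ[ℂ] B) (hf : ∀ a, 0 ≤ f (star a * a)) (a : A) : f (star a) = star (f a) := by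
  let _ := CStarAlgebra.spectralOrder A
  have := CStarAlgebra.spectralOrderedRing A
  let g : A →ₚ[ℂ] B := .mk₀ f fun x hx => by
    obtain ⟨c, rfl⟩ := CStarAlgebra.nonneg_iff_eq_star_mul_self.mp hx
    exact hf c
  exact map_star g a

lemma IsCompletelyPositive.map_star {B : Type*} [CStarAlgebra B] {F : A →ₗ[ℂ] B}
    (hF : IsCompletelyPositive F) (a : A) : F (star a) = star (F a) := by
  let _ := CStarAlgebra.spectralOrder B
  have := CStarAlgebra.spectralOrderedRing B
  refine F.map_star_of_nonneg_star_mul_self (fun c => ?_) a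
  obtain ⟨Z, hZ⟩ := hF 1 (.of fun _ _ => star c * c) ⟨.of fun _ _ => c, by
    ext i j; simp [Matrix.mul_apply, Matrix.star_apply]⟩
  have hZ₀₀ := congrFun₂ hZ 0 0
  simp only [Matrix.map_apply, Matrix.of_apply, Matrix.mul_apply, Matrix.star_apply,
    Fin.sum_univ_one] at hZ₀₀
  rw [hZ₀₀]
  exact star_mul_self_nonneg _

end StarPreservation

section TracePositive

variable {M : Type*} [CStarAlgebra M]

lemma exists_eq_star_mul_self_of_forall_nonneg_mul (σ : M →ₗ[ℂ] ℂ)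
    (hσ_pos : ∀ w, 0 ≤ σ (star w * w)) (hσ_faithful : ∀ w, σ (star w * w) = 0 → w = 0)
    {N : M} (hN : IsSelfAdjoint N) (h : ∀ w, 0 ≤ σ (N * (star w * w))) :
    ∃ z, N = star z * z := by
  let _ := CStarAlgebra.spectralOrder M
  have := CStarAlgebra.spectralOrderedRing M
  refine CStarAlgebra.nonneg_iff_eq_star_mul_self.mp <|
    CStarAlgebra.nonneg_iff_isSelfAdjoint_and_negPart_eq_zero.mpr ⟨hN, ?_⟩
  obtain ⟨c, hc⟩ := CStarAlgebra.nonneg_iff_eq_star_mul_self.mp (CFC.negPart_nonneg N)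
  have hN_mul : N * N⁻ = -(star N⁻ * N⁻) := by
    nth_rw 1 [← CFC.posPart_sub_negPart N hN]
    rw [sub_mul, CFC.posPart_mul_negPart, zero_sub, (CFC.negPart_nonneg N).isSelfAdjoint.star_eq]
  have h_nonpos : σ (star N⁻ * N⁻) ≤ 0 := by
    simpa [← hc, hN_mul] using h c
  exact hσ_faithful _ (le_antisymm h_nonpos (hσ_pos _))

end TracePositive

namespace Matrix

variable {ι R A : Type*} [Fintype ι]

lemma trace_mul_comm_of_tracial [CommSemiring R] [NonUnitalNonAssocSemiring A] [Module R A]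
    (τ : A →ₗ[R] R) (hτ : ∀ a b, τ (a * b) = τ (b * a)) (X Y : Matrix ι ι A) :
    τ (X * Y).trace = τ (Y * X).trace := by
  simp only [trace, diag_apply, mul_apply, map_sum]
  rw [Finset.sum_comm]
  exact Finset.sum_congr rfl fun i _ => Finset.sum_congr rfl fun j _ => hτ _ _

lemma trace_star_mul_self [NonUnitalSemiring A] [StarRing A] (W : Matrix ι ι A) :
    (star W * W).trace = ∑ i, ∑ k, star (W k i) * W k i := by
  simp [trace, mul_apply, star_apply]

variable [CStarAlgebra A] {τ : A →ₗ[ℂ] ℂ}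

lemma trace_star_mul_self_nonneg (hτ_pos : ∀ a, 0 ≤ τ (star a * a)) (W : Matrix ι ι A) :
    0 ≤ τ (star W * W).trace := by
  rw [trace_star_mul_self, map_sum]
  exact Finset.sum_nonneg fun i _ => by
    rw [map_sum]; exact Finset.sum_nonneg fun k _ => hτ_pos _

lemma eq_zero_of_trace_star_mul_self_eq_zero (hτ_pos : ∀ a, 0 ≤ τ (star a * a))
    (hτ_faithful : ∀ a, τ (star a * a) = 0 → a = 0) {W : Matrix ι ι A}
    (hW : τ (star W * W).trace = 0) : W = 0 := by
  simp only [trace_star_mul_self, map_sum] at hW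
  rw [Finset.sum_eq_zero_iff_of_nonneg fun i _ => Finset.sum_nonneg fun k _ => hτ_pos _] at hW
  ext k i
  exact hτ_faithful _ <| (Finset.sum_eq_zero_iff_of_nonneg fun k _ => hτ_pos _).mp
    (hW i (Finset.mem_univ i)) k (Finset.mem_univ k)

end Matrix

@[simp]
lemma omega_tmul {A C : Type*} [AddCommGroup A] [Module ℂ A] [NonUnitalSemiring C] [Module ℂ C]
    [SMulCommClass ℂ C C] [IsScalarTower ℂ C C] (τ : C →ₗ[ℂ] ℂ) (H : A →ₗ[ℂ] C) (a : A)
    (c : Cᵐᵒᵖ) : omega τ H (a ⊗ₜ c) = τ (H a * c.unop) :=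
  rfl

@[simp]
lemma sigmaOp_tmul {A B : Type*} [AddCommGroup A] [Module ℂ A] [AddCommGroup B] [Module ℂ B]
    (b : B) (a : Aᵐᵒᵖ) : sigmaOp A B (b ⊗ₜ a) = a.unop ⊗ₜ op b :=
  rfl

section TraceAdjoint

variable {A B : Type*} [CStarAlgebra A] [CStarAlgebra B] {τA : A →ₗ[ℂ] ℂ} {τB : B →ₗ[ℂ] ℂ}
  {F : A →ₗ[ℂ] B} {Fsharp : B →ₗ[ℂ] A}

lemma trace_map_mul_eq_of_adjoint {ι : Type*} [Fintype ι]
    (hτA_tracial : ∀ a₁ a₂ : A, τA (a₁ * a₂) = τA (a₂ * a₁))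
    (h_adj : ∀ a b, τB (F a * b) = τA (a * Fsharp b)) (M : Matrix ι ι B) (P : Matrix ι ι A) :
    τA (M.map Fsharp * P).trace = τB (P.map F * M).trace := by
  simp only [Matrix.trace, Matrix.diag_apply, Matrix.mul_apply, Matrix.map_apply, map_sum]
  rw [Finset.sum_comm]
  exact Finset.sum_congr rfl fun j _ => Finset.sum_congr rfl fun i _ => by
    rw [hτA_tracial, h_adj]

lemma map_star_of_adjoint (hτA_pos : ∀ a, 0 ≤ τA (star a * a))
    (hτA_tracial : ∀ a₁ a₂ : A, τA (a₁ * a₂) = τA (a₂ * a₁))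
    (hτA_faithful : ∀ a, τA (star a * a) = 0 → a = 0)
    (hτB_pos : ∀ b, 0 ≤ τB (star b * b)) (hτB_tracial : ∀ b₁ b₂ : B, τB (b₁ * b₂) = τB (b₂ * b₁))
    (hF_star : ∀ a, F (star a) = star (F a)) (h_adj : ∀ a b, τB (F a * b) = τA (a * Fsharp b))
    (b : B) : Fsharp (star b) = star (Fsharp b) := by
  have hτA_star := τA.map_star_of_nonneg_star_mul_self hτA_pos
  have hτB_star := τB.map_star_of_nonneg_star_mul_self hτB_pos
  have h_pair : ∀ a, τA (a * Fsharp (star b)) = τA (a * star (Fsharp b)) := fun a => calc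
    τA (a * Fsharp (star b)) = τB (F a * star b) := (h_adj a _).symm
    _ = star (τB (star (F a) * b)) := by rw [← hτB_star, star_mul, star_star, hτB_tracial]
    _ = star (τA (star a * Fsharp b)) := by rw [← hF_star, h_adj]
    _ = τA (a * star (Fsharp b)) := by rw [← hτA_star, star_mul, star_star, hτA_tracial]
  rw [← sub_eq_zero]
  exact hτA_faithful _ (by rw [mul_sub, map_sub, h_pair, sub_self])

lemma isCompletelyPositive_of_adjoint (hτA_pos : ∀ a, 0 ≤ τA (star a * a))
    (hτA_tracial : ∀ a₁ a₂ : A, τA (a₁ * a₂) = τA (a₂ * a₁))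
    (hτA_faithful : ∀ a, τA (star a * a) = 0 → a = 0)
    (hτB_pos : ∀ b, 0 ≤ τB (star b * b)) (hτB_tracial : ∀ b₁ b₂ : B, τB (b₁ * b₂) = τB (b₂ * b₁))
    (hF : IsCompletelyPositive F) (hFsharp_star : ∀ b, Fsharp (star b) = star (Fsharp b))
    (h_adj : ∀ a b, τB (F a * b) = τA (a * Fsharp b)) : IsCompletelyPositive Fsharp := by
  rintro n _ ⟨Y, rfl⟩
  have h_selfAdjoint : IsSelfAdjoint ((star Y * Y).map Fsharp) :=
    Matrix.IsHermitian.map (IsSelfAdjoint.star_mul_self Y) Fsharp hFsharp_star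
  have h_nonneg (W : Matrix (Fin n) (Fin n) A) :
      0 ≤ τA ((star Y * Y).map Fsharp * (star W * W)).trace := by
    obtain ⟨Z, hZ⟩ := hF n (star W * W) ⟨W, rfl⟩
    calc 0 ≤ τB (star (Z * star Y) * (Z * star Y)).trace :=
          Matrix.trace_star_mul_self_nonneg hτB_pos _
      _ = τB (star Z * Z * star Y * Y).trace := by
          rw [Matrix.trace_mul_comm_of_tracial τB hτB_tracial _ Y]
          simp only [star_mul, star_star, mul_assoc]
      _ = τA ((star Y * Y).map Fsharp * (star W * W)).trace := by
          rw [trace_map_mul_eq_of_adjoint hτA_tracial h_adj, hZ, mul_assoc (star Z * Z)]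
  -- The C⋆-algebra structure on `CStarMatrix` is only available once `A` carries its order.
  let _ := CStarAlgebra.spectralOrder A
  have := CStarAlgebra.spectralOrderedRing A
  let σ : CStarMatrix (Fin n) (Fin n) A →ₗ[ℂ] ℂ :=
    τA ∘ₗ Matrix.traceLinearMap (Fin n) ℂ A ∘ₗ CStarMatrix.ofMatrixₗ.symm.toLinearMap
  exact exists_eq_star_mul_self_of_forall_nonneg_mul (M := CStarMatrix (Fin n) (Fin n) A) σ
    (fun W : Matrix (Fin n) (Fin n) A => Matrix.trace_star_mul_self_nonneg hτA_pos W)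
    (fun W : Matrix (Fin n) (Fin n) A =>
      Matrix.eq_zero_of_trace_star_mul_self_eq_zero (W := W) hτA_pos hτA_faithful)
    h_selfAdjoint h_nonneg

lemma omega_eq_omega_comp_sigmaOp (hτA_tracial : ∀ a₁ a₂ : A, τA (a₁ * a₂) = τA (a₂ * a₁))
    (h_adj : ∀ a b, τB (F a * b) = τA (a * Fsharp b)) :
    omega τA Fsharp = omega τB F ∘ₗ sigmaOp A B :=
  TensorProduct.ext' fun b a => by
    rw [LinearMap.comp_apply, sigmaOp_tmul, omega_tmul, omega_tmul, unop_op, h_adj, hτA_tracial]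

end TraceAdjoint

theorem adjoint_traceChannel_general
    (A B : Type*) [CStarAlgebra A] [CStarAlgebra B]
    (τA : A →ₗ[ℂ] ℂ)
    (hτA_pos : ∀ a : A, 0 ≤ τA (star a * a))
    (hτA_tracial : ∀ a₁ a₂ : A, τA (a₁ * a₂) = τA (a₂ * a₁))
    (hτA_faithful : ∀ a : A, τA (star a * a) = 0 → a = 0)
    (τB : B →ₗ[ℂ] ℂ)
    (hτB_pos : ∀ b : B, 0 ≤ τB (star b * b))
    (hτB_tracial : ∀ b₁ b₂ : B, τB (b₁ * b₂) = τB (b₂ * b₁))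
    (F : A →ₗ[ℂ] B) (hF_cp : IsCompletelyPositive F) (hF_tr : τB (F 1) = 1)
    (Fsharp : B →ₗ[ℂ] A)
    (h_adj : ∀ (a : A) (b : B), τB (F a * b) = τA (a * Fsharp b)) :
    (IsCompletelyPositive Fsharp ∧ τA (Fsharp 1) = 1) ∧
      omega τA Fsharp = (omega τB F) ∘ₗ sigmaOp A B := by
  have hFsharp_star := map_star_of_adjoint hτA_pos hτA_tracial hτA_faithful hτB_pos hτB_tracial
    hF_cp.map_star h_adj
  refine ⟨⟨isCompletelyPositive_of_adjoint hτA_pos hτA_tracial hτA_faithful hτB_pos hτB_tracial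
    hF_cp hFsharp_star h_adj, ?_⟩, omega_eq_omega_comp_sigmaOp hτA_tracial h_adj⟩
  simpa [hF_tr] using (h_adj 1 1).symm

/-- Let `A`, `B` be unital C*-algebras with faithful traces `τ_A`, `τ_B`.
If `F ∈ TC_{τ_B}(A,B)` and `F# : B → A` satisfies `τ_B (F a * b) = τ_A (a * F# b)` for all
`a, b`, then `F# ∈ TC_{τ_A}(B,A)` and `ω_{τ_A}(F#) = ω_{τ_B}(F) ∘ Σᵒᵖ`. -/
theorem adjoint_traceChannel
    (A B : Type*) [CStarAlgebra A] [CStarAlgebra B]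
    (τA : A →ₗ[ℂ] ℂ) (hτA_ne : τA ≠ 0)
    (hτA_pos : ∀ a : A, 0 ≤ τA (star a * a))
    (hτA_tracial : ∀ a₁ a₂ : A, τA (a₁ * a₂) = τA (a₂ * a₁))
    (hτA_faithful : ∀ a : A, τA (star a * a) = 0 → a = 0)
    (τB : B →ₗ[ℂ] ℂ) (hτB_ne : τB ≠ 0)
    (hτB_pos : ∀ b : B, 0 ≤ τB (star b * b))
    (hτB_tracial : ∀ b₁ b₂ : B, τB (b₁ * b₂) = τB (b₂ * b₁))
    (hτB_faithful : ∀ b : B, τB (star b * b) = 0 → b = 0)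
    (F : A →ₗ[ℂ] B) (hF_cp : IsCompletelyPositive F) (hF_tr : τB (F 1) = 1)
    (Fsharp : B →ₗ[ℂ] A)
    (h_adj : ∀ (a : A) (b : B), τB (F a * b) = τA (a * Fsharp b)) :
    (IsCompletelyPositive Fsharp ∧ τA (Fsharp 1) = 1) ∧
      omega τA Fsharp = (omega τB F) ∘ₗ sigmaOp A B :=
  adjoint_traceChannel_general A B τA hτA_pos hτA_tracial hτA_faithful τB hτB_pos hτB_tracial F
    hF_cp hF_tr Fsharp h_adj
end

section
/- Let A be a unital C*-algebra and n ≥ 1. Let L be a [0,∞]-valued seminorm on A and K a [0,∞]-valued seminorm on M_n(A). Assume: (1) for every state ψ on M_n(ℂ) and every X ∈ M_n(A), L((ψ ⊗ id)(X)) ≤ K(X); (2) for every x ∈ A with L(x) ≤ 1, one has K(x · 1_n) ≤ 1, where x · 1_n ∈ M_n(A) is the diagonal matrix with every diagonal entry equal to x. Then for all states φ₁, φ₂ on A and every state ψ on M_n(ℂ): mk_L(φ₁, φ₂) = mk_K(ψ ⊗ φ₁, ψ ⊗ φ₂). -/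
open scoped ComplexOrder ENNReal
open Finset

/-- A state on a unital complex *-algebra: a positive unital linear functional. -/
def IsState {D : Type*} [Ring D] [StarRing D] [Module ℂ D] (φ : D →ₗ[ℂ] ℂ) : Prop :=
  (∀ d : D, 0 ≤ φ (star d * d)) ∧ φ 1 = 1

/-- The Monge–Kantorovič distance associated to a `[0,∞]`-valued seminorm `L`:
`mk_L(φ, ψ) = sup { |φ x − ψ x| : L x ≤ 1 }`. -/
noncomputable def mkDist {V : Type*} (L : V → ℝ≥0∞) (φ ψ : V → ℂ) : ℝ≥0∞ :=
  ⨆ (x : V) (_ : L x ≤ 1), (‖φ x - ψ x‖₊ : ℝ≥0∞)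

/-! Tensoring with `ψ` embeds `A` into `M_n(A)` via `x ↦ x · 1_n` and the slice map `ψ ⊗ id`
projects back; both send `ψ ⊗ φ` to `φ` (the first because `ψ 1 = 1`). Condition (2) says the
embedding maps the `L`-unit ball into the `K`-unit ball, condition (1) says the slice map maps
the `K`-unit ball into the `L`-unit ball, so each supremum dominates the other. -/

theorem mkDist_le_mkDist_of_map {V W : Type*} {L : V → ℝ≥0∞} {K : W → ℝ≥0∞}
    {φ₁ φ₂ : V → ℂ} {χ₁ χ₂ : W → ℂ} (f : V → W) (hf : ∀ x, L x ≤ 1 → K (f x) ≤ 1)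
    (h₁ : ∀ x, χ₁ (f x) = φ₁ x) (h₂ : ∀ x, χ₂ (f x) = φ₂ x) :
    mkDist L φ₁ φ₂ ≤ mkDist K χ₁ χ₂ :=
  iSup₂_le fun x hx => le_iSup₂_of_le (f x) (hf x hx) (by rw [h₁, h₂])

namespace Matrix

variable {m A : Type*} [Fintype m] [AddCommMonoid A] [Module ℂ A]

theorem sum_sum_single_smul_diagonal [DecidableEq m] (ψ : Matrix m m ℂ →ₗ[ℂ] ℂ) (x : A) :
    ∑ i, ∑ j, ψ (single i j 1) • diagonal (fun _ => x) i j = ψ 1 • x := by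
  simp_rw [diagonal_apply, smul_ite, smul_zero, Finset.sum_ite_eq, Finset.mem_univ, if_true,
    ← Finset.sum_smul, ← map_sum, sum_single_one]

theorem map_sum_sum_smul (φ : A →ₗ[ℂ] ℂ) (c : m → m → ℂ) (X : Matrix m m A) :
    φ (∑ i, ∑ j, c i j • X i j) = ∑ i, ∑ j, c i j * φ (X i j) := by
  simp only [map_sum, map_smul, smul_eq_mul]

end Matrix

theorem mk_eq_of_slice_conditions_general
    (A : Type*) [CStarAlgebra A] (n : ℕ)
    (L : A → ℝ≥0∞)
    (K : Matrix (Fin n) (Fin n) A → ℝ≥0∞)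
    (h1 : ∀ (ψ : Matrix (Fin n) (Fin n) ℂ →ₗ[ℂ] ℂ), IsState ψ →
      ∀ X : Matrix (Fin n) (Fin n) A,
        L (∑ i, ∑ j, ψ (Matrix.single i j 1) • X i j) ≤ K X)
    (h2 : ∀ x : A, L x ≤ 1 → K (Matrix.diagonal (fun _ => x)) ≤ 1)
    (φ₁ φ₂ : A →ₗ[ℂ] ℂ)
    (ψ : Matrix (Fin n) (Fin n) ℂ →ₗ[ℂ] ℂ) (hψ : IsState ψ) :
    mkDist L φ₁ φ₂ =
      mkDist K
        (fun X => ∑ i, ∑ j, ψ (Matrix.single i j 1) * φ₁ (X i j))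
        (fun X => ∑ i, ∑ j, ψ (Matrix.single i j 1) * φ₂ (X i j)) := by
  have tensor_diagonal (φ : A →ₗ[ℂ] ℂ) (x : A) :
      ∑ i, ∑ j, ψ (Matrix.single i j 1) * φ (Matrix.diagonal (fun _ => x) i j) = φ x := by
    rw [← Matrix.map_sum_sum_smul, Matrix.sum_sum_single_smul_diagonal, hψ.2, one_smul]
  apply le_antisymm
  · exact mkDist_le_mkDist_of_map (fun x => Matrix.diagonal fun _ => x) h2
      (tensor_diagonal φ₁) (tensor_diagonal φ₂)
  · exact mkDist_le_mkDist_of_map (fun X => ∑ i, ∑ j, ψ (Matrix.single i j 1) • X i j)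
      (fun X hX => (h1 ψ hψ X).trans hX)
      (Matrix.map_sum_sum_smul φ₁ _) (Matrix.map_sum_sum_smul φ₂ _)

/-- Let `A` be a unital C*-algebra and `n ≥ 1`.  Let `L` be a
`[0,∞]`-valued seminorm on `A` and `K` one on `M_n(A)` such that
(1) `L((ψ ⊗ id)(X)) ≤ K(X)` for every state `ψ` on `M_n(ℂ)` and `X ∈ M_n(A)`, and
(2) `K(x·1_n) ≤ 1` whenever `L(x) ≤ 1`.
Then for all states `φ₁, φ₂` on `A` and every state `ψ` on `M_n(ℂ)`:
`mk_L(φ₁, φ₂) = mk_K(ψ ⊗ φ₁, ψ ⊗ φ₂)`. -/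
theorem mk_eq_of_slice_conditions
    (A : Type*) [CStarAlgebra A] (n : ℕ) (hn : 1 ≤ n)
    (L : A → ℝ≥0∞)
    (hL_add : ∀ x y : A, L (x + y) ≤ L x + L y)
    (hL_smul : ∀ (c : ℂ), c ≠ 0 → ∀ x : A, L (c • x) = (‖c‖₊ : ℝ≥0∞) * L x)
    (K : Matrix (Fin n) (Fin n) A → ℝ≥0∞)
    (hK_add : ∀ X Y : Matrix (Fin n) (Fin n) A, K (X + Y) ≤ K X + K Y)
    (hK_smul : ∀ (c : ℂ), c ≠ 0 → ∀ X : Matrix (Fin n) (Fin n) A,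
      K (c • X) = (‖c‖₊ : ℝ≥0∞) * K X)
    (h1 : ∀ (ψ : Matrix (Fin n) (Fin n) ℂ →ₗ[ℂ] ℂ), IsState ψ →
      ∀ X : Matrix (Fin n) (Fin n) A,
        L (∑ i, ∑ j, ψ (Matrix.single i j 1) • X i j) ≤ K X)
    (h2 : ∀ x : A, L x ≤ 1 → K (Matrix.diagonal (fun _ => x)) ≤ 1)
    (φ₁ φ₂ : A →ₗ[ℂ] ℂ) (hφ₁ : IsState φ₁) (hφ₂ : IsState φ₂)
    (ψ : Matrix (Fin n) (Fin n) ℂ →ₗ[ℂ] ℂ) (hψ : IsState ψ) :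
    mkDist L φ₁ φ₂ =
      mkDist K
        (fun X => ∑ i, ∑ j, ψ (Matrix.single i j 1) * φ₁ (X i j))
        (fun X => ∑ i, ∑ j, ψ (Matrix.single i j 1) * φ₂ (X i j)) :=
  mk_eq_of_slice_conditions_general A n L K h1 h2 φ₁ φ₂ ψ hψ
end

section
/- Let A and B be unital C*-algebras, m ≥ 1, and let L_A, L_B, L_M be [0,∞]-valued seminorms on A, B, and M_m(ℂ) respectively. Define the induced seminorm 𝕃_A on M_m(A) by 𝕃_A(X) := sup{ L_A(Σ_{r,s} ψ(E_{rs}) • X r s) : ψ a state on M_m(ℂ) } + sup{ L_M( (r,s) ↦ φ(X s r) ) : φ a state on A }, and define 𝕃_B on M_m(B) by the same formula with L_B in place of L_A and states on B in the second supremum. If F : A → B is a unital completely positive map with L_B(F(a)) ≤ L_A(a) for all a ∈ A, then 𝕃_B((F applied entrywise)(X)) ≤ 𝕃_A(X) for every X ∈ M_m(A). -/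
open scoped ComplexOrder ENNReal
open Finset

/-- The induced tensor seminorm `𝕃_A` on `M_m(A)`:
`𝕃_A(X) = sup_{ψ ∈ S(M_m(ℂ))} L_A(Σ_{r,s} ψ(E_{rs}) • X r s)
          + sup_{φ ∈ S(A)} L_M((r,s) ↦ φ (X s r))`. -/
noncomputable def inducedSeminorm {A : Type*} [Ring A] [StarRing A] [Module ℂ A] {m : ℕ}
    (LA : A → ℝ≥0∞) (LM : Matrix (Fin m) (Fin m) ℂ → ℝ≥0∞) :
    Matrix (Fin m) (Fin m) A → ℝ≥0∞ := fun X =>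
  (⨆ (ψ : Matrix (Fin m) (Fin m) ℂ →ₗ[ℂ] ℂ) (_ : IsState ψ),
      LA (∑ r, ∑ s, ψ (Matrix.single r s 1) • X r s)) +
    (⨆ (φ : A →ₗ[ℂ] ℂ) (_ : IsState φ), LM (Matrix.of fun r s => φ (X s r)))

/- The first supremum of `𝕃_B(F(X))` runs over the same states `ψ` as that of `𝕃_A(X)`, and
its terms are `L_B(F(Σ ψ(E_{rs}) • X r s)) ≤ L_A(Σ ψ(E_{rs}) • X r s)` by linearity of `F`.
Each term `L_M((r,s) ↦ φ(F(X s r)))` of the second supremum is a term of the second supremum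
of `𝕃_A(X)`, for the state `φ ∘ F`: positivity of `F` (complete positivity at `n = 1`) and
`F 1 = 1` make `φ ∘ F` a state. -/

theorem IsCompletelyPositive.exists_map_star_mul_self {A B : Type*}
    [NonUnitalSemiring A] [StarRing A] [Module ℂ A]
    [NonUnitalSemiring B] [StarRing B] [Module ℂ B] {F : A →ₗ[ℂ] B}
    (hF : IsCompletelyPositive F) (a : A) : ∃ b : B, F (star a * a) = star b * b := by
  obtain ⟨Z, hZ⟩ := hF 1 (Matrix.of fun _ _ => star a * a) ⟨Matrix.of fun _ _ => a, by
    ext i j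
    simp [Matrix.mul_apply]⟩
  refine ⟨Z 0 0, ?_⟩
  simpa [Matrix.mul_apply] using congrFun (congrFun hZ 0) 0

theorem IsState.comp {A B : Type*} [Ring A] [StarRing A] [Module ℂ A]
    [Ring B] [StarRing B] [Module ℂ B] {φ : B →ₗ[ℂ] ℂ} (hφ : IsState φ)
    {F : A →ₗ[ℂ] B} (hF_cp : IsCompletelyPositive F) (hF_unital : F 1 = 1) :
    IsState (φ.comp F) := by
  refine ⟨fun a => ?_, by simpa [hF_unital] using hφ.2⟩
  obtain ⟨b, hb⟩ := hF_cp.exists_map_star_mul_self a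
  simpa [hb] using hφ.1 b

theorem inducedSeminorm_entrywise_le_general
    (A B : Type*) [CStarAlgebra A] [CStarAlgebra B] (m : ℕ)
    (LA : A → ℝ≥0∞)
    (LB : B → ℝ≥0∞)
    (LM : Matrix (Fin m) (Fin m) ℂ → ℝ≥0∞)
    (F : A →ₗ[ℂ] B) (hF_cp : IsCompletelyPositive F) (hF_unital : F 1 = 1)
    (hF_lip : ∀ a : A, LB (F a) ≤ LA a)
    (X : Matrix (Fin m) (Fin m) A) :
    inducedSeminorm LB LM (X.map F) ≤ inducedSeminorm LA LM X := by
  unfold inducedSeminorm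
  gcongr ?_ + ?_
  · refine iSup₂_le fun ψ hψ => le_iSup₂_of_le ψ hψ ?_
    simpa [map_sum] using hF_lip (∑ r, ∑ s, ψ (Matrix.single r s 1) • X r s)
  · exact iSup₂_le fun φ hφ => le_iSup₂_of_le (φ.comp F) (hφ.comp hF_cp hF_unital) le_rfl

/-- Let `A`, `B` be unital C*-algebras, `m ≥ 1`, and `L_A, L_B, L_M`
`[0,∞]`-valued seminorms on `A`, `B`, `M_m(ℂ)`.  If `F : A → B` is unital completely
positive with `L_B (F a) ≤ L_A a` for all `a`, then the induced seminorms satisfy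
`𝕃_B(F(X)) ≤ 𝕃_A(X)` for every `X ∈ M_m(A)` (entrywise application of `F`). -/
theorem inducedSeminorm_entrywise_le
    (A B : Type*) [CStarAlgebra A] [CStarAlgebra B] (m : ℕ) (hm : 1 ≤ m)
    (LA : A → ℝ≥0∞)
    (hLA_add : ∀ x y : A, LA (x + y) ≤ LA x + LA y)
    (hLA_smul : ∀ (c : ℂ), c ≠ 0 → ∀ x : A, LA (c • x) = (‖c‖₊ : ℝ≥0∞) * LA x)
    (LB : B → ℝ≥0∞)
    (hLB_add : ∀ x y : B, LB (x + y) ≤ LB x + LB y)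
    (hLB_smul : ∀ (c : ℂ), c ≠ 0 → ∀ x : B, LB (c • x) = (‖c‖₊ : ℝ≥0∞) * LB x)
    (LM : Matrix (Fin m) (Fin m) ℂ → ℝ≥0∞)
    (hLM_add : ∀ x y : Matrix (Fin m) (Fin m) ℂ, LM (x + y) ≤ LM x + LM y)
    (hLM_smul : ∀ (c : ℂ), c ≠ 0 → ∀ x : Matrix (Fin m) (Fin m) ℂ,
      LM (c • x) = (‖c‖₊ : ℝ≥0∞) * LM x)
    (F : A →ₗ[ℂ] B) (hF_cp : IsCompletelyPositive F) (hF_unital : F 1 = 1)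
    (hF_lip : ∀ a : A, LB (F a) ≤ LA a)
    (X : Matrix (Fin m) (Fin m) A) :
    inducedSeminorm LB LM (X.map F) ≤ inducedSeminorm LA LM X :=
  inducedSeminorm_entrywise_le_general A B m LA LB LM F hF_cp hF_unital hF_lip X
end
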